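/- Let a, b, L > 0, let ϑ₂ : [0,a] → [0,b] be continuous and non-increasing, let D := {(s,t) : 0 ≤ s ≤ a, 0 ≤ t ≤ ϑ₂(s)}, set ϑ₁(t) := sup{s ∈ [0,a] : ϑ₂(s) ≥ t}, and for (s,t) ∈ D set E(s,t) := {(σ,τ) ∈ D : σ ≥ s, τ ≥ t}. Let g : D × ℝⁿ × ℝⁿ × ℝⁿ → ℝⁿ be continuous and satisfy |g(σ,τ,Ψ₁,P₁,Q₁) − g(σ,τ,Ψ₂,P₂,Q₂)| ≤ L(|Ψ₁−Ψ₂| + |P₁−P₂| + |Q₁−Q₂|), let ψ₀ : D → ℝⁿ be continuous with continuous first partial derivatives, and define the combined operator S sending a continuous triple (ψ,P,Q) : D → (ℝⁿ)³ to the triple ( ψ₀ + ∬_{E(·,·)} g(σ,τ,ψ,P,Q) dA, ∂ψ₀/∂s − ∫_·^{ϑ₂(·)} g(·,τ,ψ,P,Q) dτ, ∂ψ₀/∂t − ∫_·^{ϑ₁(·)} g(σ,·,ψ,P,Q) dσ ). For ρ > 0 define ‖(ψ,P,Q)‖_ρ := ‖ψ‖_ρ + ‖P‖_ρ + ‖Q‖_ρ,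 where ‖f‖_ρ := max_{(s,t)∈D} e^{−ρ(a−s+b−t)}|f(s,t)|. Then there exists ρ₀ > 0 such that for every ρ ≥ ρ₀ the operator S is a contraction with respect to ‖·‖_ρ, i.e. there is k < 1 with ‖S(ψ₁,P₁,Q₁) − S(ψ₂,P₂,Q₂)‖_ρ ≤ k ‖(ψ₁−ψ₂, P₁−P₂, Q₁−Q₂)‖_ρ for all continuous triples. -/

import Mathlib

/-!
Let `M` be the weighted norm of the difference of two triples. As `g` is `L`-Lipschitz, the two
integrands differ at `(σ, τ)` by at most `L M e^{ρ(a-σ)} e^{ρ(b-τ)}`. Integrating this over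
`E(s,t) ⊆ [s,a] × [t,b]` gives at most `L M e^{ρ(a-s+b-t)} / ρ²`, and integrating it along the
segment from `(s,t)` to `B_s` or to `A_t` gives at most `L M e^{ρ(a-s+b-t)} / ρ`; the factor
`e^{ρ(a-s+b-t)}` is cancelled by the weight at `(s,t)`. So `S` is Lipschitz with constant
`L/ρ² + 2L/ρ ≤ 3L/ρ`, which is `< 1` once `ρ ≥ 3L + 1`.
-/

open Set MeasureTheory intervalIntegral

lemma hasDerivAt_neg_exp_mul_sub_div {ρ : ℝ} (hρ : ρ ≠ 0) (c x : ℝ) :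
    HasDerivAt (fun y => -(Real.exp (ρ * (c - y)) / ρ)) (Real.exp (ρ * (c - x))) x := by
  have h := ((((hasDerivAt_id x).const_sub c).const_mul ρ).exp.div_const ρ).neg
  exact h.congr_deriv (by simp only [id]; field_simp)

lemma integral_exp_mul_sub {ρ : ℝ} (hρ : ρ ≠ 0) (c s e : ℝ) :
    ∫ x in s..e, Real.exp (ρ * (c - x)) =
      (Real.exp (ρ * (c - s)) - Real.exp (ρ * (c - e))) / ρ := by
  rw [integral_eq_sub_of_hasDerivAt (fun x _ => hasDerivAt_neg_exp_mul_sub_div hρ c x)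
    ((by fun_prop : Continuous fun x => Real.exp (ρ * (c - x))).intervalIntegrable _ _)]
  ring

lemma integral_exp_mul_sub_le {ρ : ℝ} (hρ : 0 < ρ) (c s e : ℝ) :
    ∫ x in s..e, Real.exp (ρ * (c - x)) ≤ Real.exp (ρ * (c - s)) / ρ := by
  rw [integral_exp_mul_sub hρ.ne']
  gcongr
  exact sub_le_self _ (Real.exp_pos _).le

lemma ContinuousOn.comp_prodMk₃ {X Y Z : Type*} [TopologicalSpace X] [TopologicalSpace Y]
    [TopologicalSpace Z] {D : Set X} {g : X → Y → Y → Y → Z}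
    (hg : ContinuousOn (fun q : X × Y × Y × Y => g q.1 q.2.1 q.2.2.1 q.2.2.2) (D ×ˢ univ))
    {u v w : X → Y} (hu : ContinuousOn u D) (hv : ContinuousOn v D) (hw : ContinuousOn w D) :
    ContinuousOn (fun q => g q (u q) (v q) (w q)) D :=
  hg.comp (continuousOn_id.prodMk (hu.prodMk (hv.prodMk hw))) fun _ hq => ⟨hq, mem_univ _⟩

variable {E : Type*} [NormedAddCommGroup E]

section WeightedSup

variable {X : Type*} {D : Set X} {d : X → ℝ} {ρ : ℝ}

noncomputable def expWeightedSup (D : Set X) (d : X → ℝ) (ρ : ℝ) (f : X → E) : ℝ :=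
  ⨆ q : D, Real.exp (-ρ * d q) * ‖f q‖

lemma expWeightedSup_nonneg (f : X → E) : 0 ≤ expWeightedSup D d ρ f :=
  Real.iSup_nonneg fun _ => by positivity

lemma expWeightedSup_le {f : X → E} {C : ℝ} (hC : 0 ≤ C)
    (hf : ∀ q ∈ D, ‖f q‖ ≤ Real.exp (ρ * d q) * C) : expWeightedSup D d ρ f ≤ C :=
  Real.iSup_le (fun q => by
    rw [neg_mul, Real.exp_neg, inv_mul_le_iff₀ (Real.exp_pos _)]
    exact hf q q.2) hC

variable [TopologicalSpace X]

lemma norm_le_exp_mul_expWeightedSup (hD : IsCompact D) (hd : ContinuousOn d D) {f : X → E}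
    (hf : ContinuousOn f D) {q : X} (hq : q ∈ D) :
    ‖f q‖ ≤ Real.exp (ρ * d q) * expWeightedSup D d ρ f := by
  have hbdd : BddAbove (range fun q : D => Real.exp (-ρ * d q) * ‖f q‖) := by
    have h := hD.bddAbove_image (f := fun q => Real.exp (-ρ * d q) * ‖f q‖) (by fun_prop)
    rwa [image_eq_range] at h
  have hq' := le_ciSup hbdd ⟨q, hq⟩
  rwa [neg_mul, Real.exp_neg, inv_mul_le_iff₀ (Real.exp_pos _)] at hq'

lemma norm_sub_le_mul_expWeightedSup {F : Type*} [NormedAddCommGroup F]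
    {g : X → E → E → E → F} {L : ℝ} (hL : 0 ≤ L) (hD : IsCompact D) (hd : ContinuousOn d D)
    (hg : ∀ p ∈ D, ∀ Ψ₁ P₁ Q₁ Ψ₂ P₂ Q₂ : E,
      ‖g p Ψ₁ P₁ Q₁ - g p Ψ₂ P₂ Q₂‖ ≤ L * (‖Ψ₁ - Ψ₂‖ + ‖P₁ - P₂‖ + ‖Q₁ - Q₂‖))
    {u₁ v₁ w₁ u₂ v₂ w₂ : X → E} (hu : ContinuousOn (u₁ - u₂) D) (hv : ContinuousOn (v₁ - v₂) D)
    (hw : ContinuousOn (w₁ - w₂) D) {q : X} (hq : q ∈ D) :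
    ‖g q (u₁ q) (v₁ q) (w₁ q) - g q (u₂ q) (v₂ q) (w₂ q)‖ ≤
      L * (expWeightedSup D d ρ (u₁ - u₂) + expWeightedSup D d ρ (v₁ - v₂) +
        expWeightedSup D d ρ (w₁ - w₂)) * Real.exp (ρ * d q) := by
  have hu' := norm_le_exp_mul_expWeightedSup (ρ := ρ) hD hd hu hq
  have hv' := norm_le_exp_mul_expWeightedSup (ρ := ρ) hD hd hv hq
  have hw' := norm_le_exp_mul_expWeightedSup (ρ := ρ) hD hd hw hq
  simp only [Pi.sub_apply] at hu' hv' hw'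
  calc _ ≤ L * (‖u₁ q - u₂ q‖ + ‖v₁ q - v₂ q‖ + ‖w₁ q - w₂ q‖) := hg q hq _ _ _ _ _ _
    _ ≤ L * (Real.exp (ρ * d q) * expWeightedSup D d ρ (u₁ - u₂) +
          Real.exp (ρ * d q) * expWeightedSup D d ρ (v₁ - v₂) +
          Real.exp (ρ * d q) * expWeightedSup D d ρ (w₁ - w₂)) := by gcongr
    _ = _ := by ring

end WeightedSup

section Integrals

variable [NormedSpace ℝ E]

lemma norm_intervalIntegral_le_of_norm_le_exp {f : ℝ → E} {ρ K c s e : ℝ} (hρ : 0 < ρ)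
    (hK : 0 ≤ K) (hse : s ≤ e) (hf : ∀ x ∈ Icc s e, ‖f x‖ ≤ K * Real.exp (ρ * (c - x))) :
    ‖∫ x in s..e, f x‖ ≤ Real.exp (ρ * (c - s)) * (K / ρ) :=
  calc ‖∫ x in s..e, f x‖ ≤ ∫ x in s..e, K * Real.exp (ρ * (c - x)) :=
        norm_integral_le_of_norm_le hse (ae_of_all _ fun x hx => hf x (Ioc_subset_Icc_self hx))
          ((by fun_prop : Continuous fun x => K * Real.exp (ρ * (c - x))).intervalIntegrable _ _)
    _ = K * ∫ x in s..e, Real.exp (ρ * (c - x)) := integral_const_mul _ _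
    _ ≤ K * (Real.exp (ρ * (c - s)) / ρ) := by gcongr; exact integral_exp_mul_sub_le hρ c s e
    _ = Real.exp (ρ * (c - s)) * (K / ρ) := by ring

lemma setIntegral_Icc_exp_mul_sub_le {ρ c s e : ℝ} (hρ : 0 < ρ) (hse : s ≤ e) :
    ∫ x in Icc s e, Real.exp (ρ * (c - x)) ≤ Real.exp (ρ * (c - s)) / ρ := by
  rw [integral_Icc_eq_integral_Ioc, ← integral_of_le hse]
  exact integral_exp_mul_sub_le hρ c s e

lemma norm_setIntegral_le_of_subset_Icc_prod {f : ℝ × ℝ → E} {Ω : Set (ℝ × ℝ)}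
    {ρ K a b s t : ℝ} (hρ : 0 < ρ) (hK : 0 ≤ K) (hs : s ≤ a) (ht : t ≤ b)
    (hΩ : Ω ⊆ Icc s a ×ˢ Icc t b) (hΩm : MeasurableSet Ω)
    (hf : ∀ q ∈ Ω, ‖f q‖ ≤ K * Real.exp (ρ * (a - q.1 + b - q.2))) :
    ‖∫ q in Ω, f q‖ ≤ Real.exp (ρ * (a - s + b - t)) * (K / ρ ^ 2) := by
  have hexp : ∀ x y : ℝ, Real.exp (ρ * (a - x + b - y)) =
      Real.exp (ρ * (a - x)) * Real.exp (ρ * (b - y)) := fun x y => by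
    rw [← Real.exp_add]; ring_nf
  have hw : IntegrableOn
      (fun q : ℝ × ℝ => K * Real.exp (ρ * (a - q.1)) * Real.exp (ρ * (b - q.2)))
      (Icc s a ×ˢ Icc t b) :=
    (by fun_prop : Continuous _).continuousOn.integrableOn_compact
      (isCompact_Icc.prod isCompact_Icc)
  calc ‖∫ q in Ω, f q‖
      ≤ ∫ q in Ω, K * Real.exp (ρ * (a - q.1)) * Real.exp (ρ * (b - q.2)) :=
        norm_integral_le_of_norm_le (hw.mono_set hΩ) <| ae_restrict_of_forall_mem hΩm
          fun q hq => (hf q hq).trans_eq (by rw [hexp, mul_assoc])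
    _ ≤ ∫ q in Icc s a ×ˢ Icc t b, K * Real.exp (ρ * (a - q.1)) * Real.exp (ρ * (b - q.2)) :=
        setIntegral_mono_set hw (ae_of_all _ fun q => by positivity) hΩ.eventuallyLE
    _ = (∫ x in Icc s a, K * Real.exp (ρ * (a - x))) *
          ∫ y in Icc t b, Real.exp (ρ * (b - y)) := by
        rw [Measure.volume_eq_prod]
        exact setIntegral_prod_mul (fun x => K * Real.exp (ρ * (a - x)))
          (fun y => Real.exp (ρ * (b - y))) _ _
    _ ≤ (K * (Real.exp (ρ * (a - s)) / ρ)) * (Real.exp (ρ * (b - t)) / ρ) := by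
        rw [MeasureTheory.integral_const_mul]
        gcongr
        · exact setIntegral_Icc_exp_mul_sub_le hρ hs
        · exact setIntegral_Icc_exp_mul_sub_le hρ ht
    _ = Real.exp (ρ * (a - s + b - t)) * (K / ρ ^ 2) := by rw [hexp]; ring

end Integrals

section Region

variable {a b : ℝ} {θ : ℝ → ℝ}

def underGraph (a : ℝ) (θ : ℝ → ℝ) : Set (ℝ × ℝ) :=
  {p | 0 ≤ p.1 ∧ p.1 ≤ a ∧ 0 ≤ p.2 ∧ p.2 ≤ θ p.1}

noncomputable def generalizedInverse (a : ℝ) (θ : ℝ → ℝ) (t : ℝ) : ℝ :=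
  sSup {s : ℝ | s ∈ Icc (0:ℝ) a ∧ t ≤ θ s}

lemma isClosed_underGraph (hθ : ContinuousOn θ (Icc 0 a)) : IsClosed (underGraph a θ) := by
  have h := (isClosed_Icc.prod (isClosed_Ici (a := 0))).isClosed_le continuous_snd.continuousOn
    (hθ.comp continuous_fst.continuousOn fun p hp => hp.1)
  convert h using 1
  ext p
  simp only [underGraph, mem_ofPred_eq, mem_prod, mem_Icc, mem_Ici, Function.comp_apply]
  tauto

lemma underGraph_subset_Icc_prod (hθb : ∀ s ∈ Icc 0 a, θ s ≤ b) :
    underGraph a θ ⊆ Icc 0 a ×ˢ Icc 0 b :=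
  fun _ ⟨h₁, h₂, h₃, h₄⟩ => ⟨⟨h₁, h₂⟩, h₃, h₄.trans (hθb _ ⟨h₁, h₂⟩)⟩

lemma isCompact_underGraph (hθ : ContinuousOn θ (Icc 0 a)) (hθb : ∀ s ∈ Icc 0 a, θ s ≤ b) :
    IsCompact (underGraph a θ) :=
  (isCompact_Icc.prod isCompact_Icc).of_isClosed_subset (isClosed_underGraph hθ)
    (underGraph_subset_Icc_prod hθb)

lemma le_generalizedInverse {p : ℝ × ℝ} (hp : p ∈ underGraph a θ) :
    p.1 ≤ generalizedInverse a θ p.2 :=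
  le_csSup ⟨a, fun _ hs => hs.1.2⟩ ⟨⟨hp.1, hp.2.1⟩, hp.2.2.2⟩

lemma mk_mem_underGraph_of_mem_Icc (hθ : ContinuousOn θ (Icc 0 a))
    (hθa : AntitoneOn θ (Icc 0 a)) {p : ℝ × ℝ} (hp : p ∈ underGraph a θ) {σ : ℝ}
    (hσ : σ ∈ Icc p.1 (generalizedInverse a θ p.2)) : (σ, p.2) ∈ underGraph a θ := by
  obtain ⟨⟨h₀, ha⟩, hθp⟩ : generalizedInverse a θ p.2 ∈ {s | s ∈ Icc (0:ℝ) a ∧ p.2 ≤ θ s} :=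
    (hθ.preimage_isClosed_of_isClosed isClosed_Icc isClosed_Ici).csSup_mem
      ⟨p.1, ⟨hp.1, hp.2.1⟩, hp.2.2.2⟩ ⟨a, fun _ hs => hs.1.2⟩
  have hσa : σ ∈ Icc 0 a := ⟨hp.1.trans hσ.1, hσ.2.trans ha⟩
  exact ⟨hσa.1, hσa.2, hp.2.2.1, hθp.trans (hθa hσa ⟨h₀, ha⟩ hσ.2)⟩

variable [NormedSpace ℝ E] {F G : ℝ × ℝ → E} {ρ K : ℝ} {p : ℝ × ℝ}

lemma norm_setIntegral_sub_setIntegral_upperRight_le (hθ : ContinuousOn θ (Icc 0 a))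
    (hθb : ∀ s ∈ Icc 0 a, θ s ≤ b) (hF : ContinuousOn F (underGraph a θ))
    (hG : ContinuousOn G (underGraph a θ))
    (hFG : ∀ q ∈ underGraph a θ, ‖F q - G q‖ ≤ K * Real.exp (ρ * (a - q.1 + b - q.2)))
    (hρ : 0 < ρ) (hK : 0 ≤ K) (hp : p ∈ underGraph a θ) :
    ‖(∫ q in {q ∈ underGraph a θ | p.1 ≤ q.1 ∧ p.2 ≤ q.2}, F q) -
        ∫ q in {q ∈ underGraph a θ | p.1 ≤ q.1 ∧ p.2 ≤ q.2}, G q‖ ≤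
      Real.exp (ρ * (a - p.1 + b - p.2)) * (K / ρ ^ 2) := by
  set Ω := {q ∈ underGraph a θ | p.1 ≤ q.1 ∧ p.2 ≤ q.2}
  have hΩD : Ω ⊆ underGraph a θ := sep_subset _ _
  have hΩ : IsCompact Ω := (isCompact_underGraph hθ hθb).of_isClosed_subset
    ((isClosed_underGraph hθ).inter ((isClosed_le continuous_const continuous_fst).inter
      (isClosed_le continuous_const continuous_snd))) hΩD
  have hΩR : Ω ⊆ Icc p.1 a ×ˢ Icc p.2 b := fun q hq =>
    have hq' := underGraph_subset_Icc_prod hθb hq.1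
    ⟨⟨hq.2.1, hq'.1.2⟩, hq.2.2, hq'.2.2⟩
  rw [← integral_sub ((hF.mono hΩD).integrableOn_compact hΩ)
    ((hG.mono hΩD).integrableOn_compact hΩ)]
  exact norm_setIntegral_le_of_subset_Icc_prod hρ hK hp.2.1
    (hp.2.2.2.trans (hθb _ ⟨hp.1, hp.2.1⟩)) hΩR hΩ.measurableSet fun q hq => hFG q hq.1

lemma norm_integral_sub_integral_vertical_le (hF : ContinuousOn F (underGraph a θ))
    (hG : ContinuousOn G (underGraph a θ))
    (hFG : ∀ q ∈ underGraph a θ, ‖F q - G q‖ ≤ K * Real.exp (ρ * (a - q.1 + b - q.2)))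
    (hρ : 0 < ρ) (hK : 0 ≤ K) (hp : p ∈ underGraph a θ) :
    ‖(∫ τ in p.2..θ p.1, F (p.1, τ)) - ∫ τ in p.2..θ p.1, G (p.1, τ)‖ ≤
      Real.exp (ρ * (a - p.1 + b - p.2)) * (K / ρ) := by
  have hseg : MapsTo (fun τ => (p.1, τ)) (Icc p.2 (θ p.1)) (underGraph a θ) :=
    fun τ hτ => ⟨hp.1, hp.2.1, hp.2.2.1.trans hτ.1, hτ.2⟩
  rw [← intervalIntegral.integral_sub (f := fun τ => F (p.1, τ)) (g := fun τ => G (p.1, τ))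
    ((hF.comp (by fun_prop) hseg).intervalIntegrable_of_Icc hp.2.2.2)
    ((hG.comp (by fun_prop) hseg).intervalIntegrable_of_Icc hp.2.2.2)]
  exact norm_intervalIntegral_le_of_norm_le_exp hρ hK hp.2.2.2 fun τ hτ => hFG _ (hseg hτ)

lemma norm_integral_sub_integral_horizontal_le (hθ : ContinuousOn θ (Icc 0 a))
    (hθa : AntitoneOn θ (Icc 0 a)) (hF : ContinuousOn F (underGraph a θ))
    (hG : ContinuousOn G (underGraph a θ))
    (hFG : ∀ q ∈ underGraph a θ, ‖F q - G q‖ ≤ K * Real.exp (ρ * (a - q.1 + b - q.2)))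
    (hρ : 0 < ρ) (hK : 0 ≤ K) (hp : p ∈ underGraph a θ) :
    ‖(∫ σ in p.1..generalizedInverse a θ p.2, F (σ, p.2)) -
        ∫ σ in p.1..generalizedInverse a θ p.2, G (σ, p.2)‖ ≤
      Real.exp (ρ * (a - p.1 + b - p.2)) * (K / ρ) := by
  have hseg : MapsTo (fun σ => (σ, p.2)) (Icc p.1 (generalizedInverse a θ p.2)) (underGraph a θ) :=
    fun _ hσ => mk_mem_underGraph_of_mem_Icc hθ hθa hp hσ
  have hle := le_generalizedInverse hp
  rw [← intervalIntegral.integral_sub (f := fun σ => F (σ, p.2)) (g := fun σ => G (σ, p.2))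
    ((hF.comp (by fun_prop) hseg).intervalIntegrable_of_Icc hle)
    ((hG.comp (by fun_prop) hseg).intervalIntegrable_of_Icc hle)]
  convert norm_intervalIntegral_le_of_norm_le_exp (c := a + b - p.2) hρ hK hle
    (fun σ hσ => (hFG _ (hseg hσ)).trans_eq (by ring_nf)) using 3
  ring

end Region

theorem combined_operator_contraction_general
    (n : ℕ) (a b L : ℝ) (hL : 0 < L)
    (ϑ₂ : ℝ → ℝ) (hϑcont : ContinuousOn ϑ₂ (Icc 0 a))
    (hϑanti : AntitoneOn ϑ₂ (Icc 0 a))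
    (hϑmaps : ∀ s ∈ Icc (0:ℝ) a, ϑ₂ s ∈ Icc (0:ℝ) b)
    (D : Set (ℝ × ℝ))
    (hD : D = {p : ℝ × ℝ | 0 ≤ p.1 ∧ p.1 ≤ a ∧ 0 ≤ p.2 ∧ p.2 ≤ ϑ₂ p.1})
    (ϑ₁ : ℝ → ℝ)
    (hϑ₁ : ∀ t : ℝ, ϑ₁ t = sSup {s : ℝ | s ∈ Icc (0:ℝ) a ∧ t ≤ ϑ₂ s})
    (g : ℝ × ℝ → EuclideanSpace ℝ (Fin n) → EuclideanSpace ℝ (Fin n) →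
        EuclideanSpace ℝ (Fin n) → EuclideanSpace ℝ (Fin n))
    (hgcont : ContinuousOn
      (fun q : (ℝ × ℝ) × EuclideanSpace ℝ (Fin n) × EuclideanSpace ℝ (Fin n) ×
          EuclideanSpace ℝ (Fin n) => g q.1 q.2.1 q.2.2.1 q.2.2.2)
      (D ×ˢ (univ : Set (EuclideanSpace ℝ (Fin n) × EuclideanSpace ℝ (Fin n) ×
          EuclideanSpace ℝ (Fin n)))))
    (hgLip : ∀ p ∈ D, ∀ Ψ₁ P₁ Q₁ Ψ₂ P₂ Q₂ : EuclideanSpace ℝ (Fin n),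
      ‖g p Ψ₁ P₁ Q₁ - g p Ψ₂ P₂ Q₂‖ ≤ L * (‖Ψ₁ - Ψ₂‖ + ‖P₁ - P₂‖ + ‖Q₁ - Q₂‖))
    (ψ₀ ψ₀s ψ₀t : ℝ × ℝ → EuclideanSpace ℝ (Fin n))
    -- the combined operator `S`
    (S : ((ℝ × ℝ → EuclideanSpace ℝ (Fin n)) × (ℝ × ℝ → EuclideanSpace ℝ (Fin n)) ×
          (ℝ × ℝ → EuclideanSpace ℝ (Fin n))) →
        ((ℝ × ℝ → EuclideanSpace ℝ (Fin n)) × (ℝ × ℝ → EuclideanSpace ℝ (Fin n)) ×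
          (ℝ × ℝ → EuclideanSpace ℝ (Fin n))))
    (hS : ∀ T, S T =
      (fun p : ℝ × ℝ => ψ₀ p +
          ∫ q in {q ∈ D | p.1 ≤ q.1 ∧ p.2 ≤ q.2}, g q (T.1 q) (T.2.1 q) (T.2.2 q),
        fun p : ℝ × ℝ => ψ₀s p -
          ∫ τ in p.2..ϑ₂ p.1, g (p.1, τ) (T.1 (p.1, τ)) (T.2.1 (p.1, τ)) (T.2.2 (p.1, τ)),
        fun p : ℝ × ℝ => ψ₀t p -
          ∫ σ in p.1..ϑ₁ p.2, g (σ, p.2) (T.1 (σ, p.2)) (T.2.1 (σ, p.2)) (T.2.2 (σ, p.2))))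
    -- the weighted norm ‖·‖_ρ
    (normρ : ℝ → (ℝ × ℝ → EuclideanSpace ℝ (Fin n)) → ℝ)
    (hnormρ : ∀ (ρ : ℝ) (f : ℝ × ℝ → EuclideanSpace ℝ (Fin n)),
      normρ ρ f = ⨆ q : D, Real.exp (-ρ * (a - (q : ℝ × ℝ).1 + b - (q : ℝ × ℝ).2)) * ‖f q‖) :
    ∃ ρ₀ : ℝ, 0 < ρ₀ ∧ ∀ ρ : ℝ, ρ₀ ≤ ρ →
      ∃ k : ℝ, 0 ≤ k ∧ k < 1 ∧
        ∀ T₁ T₂ : (ℝ × ℝ → EuclideanSpace ℝ (Fin n)) × (ℝ × ℝ → EuclideanSpace ℝ (Fin n)) ×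
            (ℝ × ℝ → EuclideanSpace ℝ (Fin n)),
          ContinuousOn T₁.1 D → ContinuousOn T₁.2.1 D → ContinuousOn T₁.2.2 D →
          ContinuousOn T₂.1 D → ContinuousOn T₂.2.1 D → ContinuousOn T₂.2.2 D →
          normρ ρ ((S T₁).1 - (S T₂).1) + normρ ρ ((S T₁).2.1 - (S T₂).2.1) +
              normρ ρ ((S T₁).2.2 - (S T₂).2.2) ≤
            k * (normρ ρ (T₁.1 - T₂.1) + normρ ρ (T₁.2.1 - T₂.2.1) +
              normρ ρ (T₁.2.2 - T₂.2.2)) := by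
  obtain rfl : D = underGraph a ϑ₂ := hD
  obtain rfl : ϑ₁ = generalizedInverse a ϑ₂ := funext hϑ₁
  obtain rfl : normρ = expWeightedSup (underGraph a ϑ₂) fun q => a - q.1 + b - q.2 :=
    funext fun ρ => funext (hnormρ ρ)
  have hϑb : ∀ s ∈ Icc 0 a, ϑ₂ s ≤ b := fun s hs => (hϑmaps s hs).2
  refine ⟨3 * L + 1, by positivity, fun ρ hρ => ?_⟩
  have hρ₀ : 0 < ρ := by linarith
  refine ⟨3 * L / ρ, by positivity, by rw [div_lt_one hρ₀]; linarith, ?_⟩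
  intro T₁ T₂ hψ₁ hP₁ hQ₁ hψ₂ hP₂ hQ₂
  set W := expWeightedSup (E := EuclideanSpace ℝ (Fin n)) (underGraph a ϑ₂)
    (fun q => a - q.1 + b - q.2) ρ
  set M := W (T₁.1 - T₂.1) + W (T₁.2.1 - T₂.2.1) + W (T₁.2.2 - T₂.2.2)
  have hLM : 0 ≤ L * M := mul_nonneg hL.le <| add_nonneg
    (add_nonneg (expWeightedSup_nonneg _) (expWeightedSup_nonneg _)) (expWeightedSup_nonneg _)
  have hG₁ := hgcont.comp_prodMk₃ hψ₁ hP₁ hQ₁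
  have hG₂ := hgcont.comp_prodMk₃ hψ₂ hP₂ hQ₂
  have hLip : ∀ q ∈ underGraph a ϑ₂, ‖g q (T₁.1 q) (T₁.2.1 q) (T₁.2.2 q) -
      g q (T₂.1 q) (T₂.2.1 q) (T₂.2.2 q)‖ ≤ L * M * Real.exp (ρ * (a - q.1 + b - q.2)) :=
    fun q hq => norm_sub_le_mul_expWeightedSup hL.le (isCompact_underGraph hϑcont hϑb)
      (by fun_prop) hgLip (hψ₁.sub hψ₂) (hP₁.sub hP₂) (hQ₁.sub hQ₂) hq
  have h₁ : W ((S T₁).1 - (S T₂).1) ≤ L * M / ρ ^ 2 :=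
    expWeightedSup_le (by positivity) fun p hp => by
      simpa only [hS, Pi.sub_apply, add_sub_add_left_eq_sub] using
        norm_setIntegral_sub_setIntegral_upperRight_le hϑcont hϑb hG₁ hG₂ hLip hρ₀ hLM hp
  have h₂ : W ((S T₁).2.1 - (S T₂).2.1) ≤ L * M / ρ :=
    expWeightedSup_le (by positivity) fun p hp => by
      simp only [hS, Pi.sub_apply, sub_sub_sub_cancel_left]
      rw [norm_sub_rev]
      exact (norm_integral_sub_integral_vertical_le hG₁ hG₂ hLip hρ₀ hLM hp :)
  have h₃ : W ((S T₁).2.2 - (S T₂).2.2) ≤ L * M / ρ :=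
    expWeightedSup_le (by positivity) fun p hp => by
      simp only [hS, Pi.sub_apply, sub_sub_sub_cancel_left]
      rw [norm_sub_rev]
      exact (norm_integral_sub_integral_horizontal_le hϑcont hϑanti hG₁ hG₂ hLip hρ₀ hLM hp :)
  have hρ₁ : L * M / ρ ^ 2 ≤ L * M / ρ := div_le_div_of_nonneg_left hLM hρ₀ (by nlinarith)
  calc _ ≤ L * M / ρ + L * M / ρ + L * M / ρ := by linarith
    _ = 3 * L / ρ * M := by ring

/-- For `ρ` large enough, the combined operator `S` of the system (B.5) is
a contraction for the weighted (Bielecki) norm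
`‖(ψ,P,Q)‖_ρ = ‖ψ‖_ρ + ‖P‖_ρ + ‖Q‖_ρ`, `‖f‖_ρ = max_{(s,t)∈D} e^{−ρ(a−s+b−t)}|f(s,t)|`. -/
theorem combined_operator_contraction
    (n : ℕ) (a b L : ℝ) (ha : 0 < a) (hb : 0 < b) (hL : 0 < L)
    (ϑ₂ : ℝ → ℝ) (hϑcont : ContinuousOn ϑ₂ (Icc 0 a))
    (hϑanti : AntitoneOn ϑ₂ (Icc 0 a))
    (hϑmaps : ∀ s ∈ Icc (0:ℝ) a, ϑ₂ s ∈ Icc (0:ℝ) b)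
    (D : Set (ℝ × ℝ))
    (hD : D = {p : ℝ × ℝ | 0 ≤ p.1 ∧ p.1 ≤ a ∧ 0 ≤ p.2 ∧ p.2 ≤ ϑ₂ p.1})
    (ϑ₁ : ℝ → ℝ)
    (hϑ₁ : ∀ t : ℝ, ϑ₁ t = sSup {s : ℝ | s ∈ Icc (0:ℝ) a ∧ t ≤ ϑ₂ s})
    (g : ℝ × ℝ → EuclideanSpace ℝ (Fin n) → EuclideanSpace ℝ (Fin n) →
        EuclideanSpace ℝ (Fin n) → EuclideanSpace ℝ (Fin n))
    (hgcont : ContinuousOn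
      (fun q : (ℝ × ℝ) × EuclideanSpace ℝ (Fin n) × EuclideanSpace ℝ (Fin n) ×
          EuclideanSpace ℝ (Fin n) => g q.1 q.2.1 q.2.2.1 q.2.2.2)
      (D ×ˢ (univ : Set (EuclideanSpace ℝ (Fin n) × EuclideanSpace ℝ (Fin n) ×
          EuclideanSpace ℝ (Fin n)))))
    (hgLip : ∀ p ∈ D, ∀ Ψ₁ P₁ Q₁ Ψ₂ P₂ Q₂ : EuclideanSpace ℝ (Fin n),
      ‖g p Ψ₁ P₁ Q₁ - g p Ψ₂ P₂ Q₂‖ ≤ L * (‖Ψ₁ - Ψ₂‖ + ‖P₁ - P₂‖ + ‖Q₁ - Q₂‖))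
    -- `ψ₀` is continuous on `D` with continuous first partial derivatives `ψ₀s`, `ψ₀t`
    (ψ₀ ψ₀s ψ₀t : ℝ × ℝ → EuclideanSpace ℝ (Fin n))
    (hψ₀ : ContinuousOn ψ₀ D) (hψ₀s : ContinuousOn ψ₀s D) (hψ₀t : ContinuousOn ψ₀t D)
    (hψ₀ds : ∀ p ∈ D, HasDerivWithinAt (fun σ => ψ₀ (σ, p.2)) (ψ₀s p)
      {σ : ℝ | (σ, p.2) ∈ D} p.1)
    (hψ₀dt : ∀ p ∈ D, HasDerivWithinAt (fun τ => ψ₀ (p.1, τ)) (ψ₀t p)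
      {τ : ℝ | (p.1, τ) ∈ D} p.2)
    -- the combined operator `S`
    (S : ((ℝ × ℝ → EuclideanSpace ℝ (Fin n)) × (ℝ × ℝ → EuclideanSpace ℝ (Fin n)) ×
          (ℝ × ℝ → EuclideanSpace ℝ (Fin n))) →
        ((ℝ × ℝ → EuclideanSpace ℝ (Fin n)) × (ℝ × ℝ → EuclideanSpace ℝ (Fin n)) ×
          (ℝ × ℝ → EuclideanSpace ℝ (Fin n))))
    (hS : ∀ T, S T =
      (fun p : ℝ × ℝ => ψ₀ p +
          ∫ q in {q ∈ D | p.1 ≤ q.1 ∧ p.2 ≤ q.2}, g q (T.1 q) (T.2.1 q) (T.2.2 q),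
        fun p : ℝ × ℝ => ψ₀s p -
          ∫ τ in p.2..ϑ₂ p.1, g (p.1, τ) (T.1 (p.1, τ)) (T.2.1 (p.1, τ)) (T.2.2 (p.1, τ)),
        fun p : ℝ × ℝ => ψ₀t p -
          ∫ σ in p.1..ϑ₁ p.2, g (σ, p.2) (T.1 (σ, p.2)) (T.2.1 (σ, p.2)) (T.2.2 (σ, p.2))))
    -- the weighted norm ‖·‖_ρ
    (normρ : ℝ → (ℝ × ℝ → EuclideanSpace ℝ (Fin n)) → ℝ)
    (hnormρ : ∀ (ρ : ℝ) (f : ℝ × ℝ → EuclideanSpace ℝ (Fin n)),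
      normρ ρ f = ⨆ q : D, Real.exp (-ρ * (a - (q : ℝ × ℝ).1 + b - (q : ℝ × ℝ).2)) * ‖f q‖) :
    ∃ ρ₀ : ℝ, 0 < ρ₀ ∧ ∀ ρ : ℝ, ρ₀ ≤ ρ →
      ∃ k : ℝ, 0 ≤ k ∧ k < 1 ∧
        ∀ T₁ T₂ : (ℝ × ℝ → EuclideanSpace ℝ (Fin n)) × (ℝ × ℝ → EuclideanSpace ℝ (Fin n)) ×
            (ℝ × ℝ → EuclideanSpace ℝ (Fin n)),
          ContinuousOn T₁.1 D → ContinuousOn T₁.2.1 D → ContinuousOn T₁.2.2 D →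
          ContinuousOn T₂.1 D → ContinuousOn T₂.2.1 D → ContinuousOn T₂.2.2 D →
          normρ ρ ((S T₁).1 - (S T₂).1) + normρ ρ ((S T₁).2.1 - (S T₂).2.1) +
              normρ ρ ((S T₁).2.2 - (S T₂).2.2) ≤
            k * (normρ ρ (T₁.1 - T₂.1) + normρ ρ (T₁.2.1 - T₂.2.1) +
              normρ ρ (T₁.2.2 - T₂.2.2)) :=
  combined_operator_contraction_general n a b L hL ϑ₂ hϑcont hϑanti hϑmaps D hD ϑ₁ hϑ₁ g hgcont
    hgLip ψ₀ ψ₀s ψ₀t S hS normρ hnormρ
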